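/- (Gluing fiberwise transports.) Let $\mu_0, \mu_1$ be probability measures on a standard Borel space $\mathcal{Y}$, $\phi : \mathcal{Y} \to \mathcal{Z}$ measurable with $\phi_\#\mu_0 = \phi_\#\mu_1 = Q$. Let $\{\mu_{0,z}\}$ and $\{\mu_{1,z}\}$ be disintegrations of $\mu_0$ and $\mu_1$ with respect to $\phi$, each supported on the fiber $\phi^{-1}(z)$ for $Q$-a.e. $z$. Suppose there is a jointly measurable family of maps $T_z : \mathcal{Y} \to \mathcal{Y}$ with $(T_z)_\# \mu_{0,z} = \mu_{1,z}$ for $Q$-a.e. $z$. Then the map $f(y) := T_{\phi(y)}(y)$ is measurable, satisfies $f_\# \mu_0 = \mu_1$, and $\phi(f(y)) = \phi(y)$ for $\mu_0$-a.e. $y$. -/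

import Mathlib

/-!
On the fiber `φ ⁻¹' {z}` the glued map `y ↦ T (φ y) y` coincides with `T z`, so it pushes
`κ₀ z` to `κ₁ z` whenever `T z` does; integrating over `Q` then pushes `μ₀ = κ₀ ∘ₘ Q` to
`μ₁ = κ₁ ∘ₘ Q`. Likewise `T z` maps `κ₀ z`-almost every point into the fiber over `z`, because
its image law `κ₁ z` lives there.
-/

open MeasureTheory ProbabilityTheory Filter

lemma map_fiberwise_eq_map_of_ae_eq {𝒴 𝒵 : Type*} [MeasurableSpace 𝒴] {ν : Measure 𝒴}
    {φ : 𝒴 → 𝒵} {z : 𝒵} (hν : ∀ᵐ y ∂ν, φ y = z) (T : 𝒵 → 𝒴 → 𝒴) :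
    ν.map (fun y => T (φ y) y) = ν.map (T z) :=
  Measure.map_congr <| hν.mono fun y hy => by simp only [hy]

section Gluing

variable {𝒴 𝒵 : Type*} [MeasurableSpace 𝒴] [MeasurableSpace 𝒵]

lemma ae_eq_of_measure_preimage_singleton_eq_one [MeasurableSingletonClass 𝒵] {ν : Measure 𝒴}
    [IsProbabilityMeasure ν] {φ : 𝒴 → 𝒵} (hφ : Measurable φ) {z : 𝒵}
    (h : ν (φ ⁻¹' {z}) = 1) : ∀ᵐ y ∂ν, φ y = z :=
  mem_ae_iff.2 <| (prob_compl_eq_zero_iff (hφ (measurableSet_singleton z))).2 h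

variable {Q : Measure 𝒵} {κ₀ κ₁ : Kernel 𝒵 𝒴} {φ : 𝒴 → 𝒵} {T : 𝒵 → 𝒴 → 𝒴}

lemma measurable_fiberwise (hφ : Measurable φ) (hT : Measurable fun q : 𝒵 × 𝒴 => T q.1 q.2) :
    Measurable fun y => T (φ y) y :=
  hT.comp (hφ.prodMk measurable_id)

lemma ae_map_fiberwise_eq (hfib₀ : ∀ᵐ z ∂Q, ∀ᵐ y ∂κ₀ z, φ y = z)
    (hpush : ∀ᵐ z ∂Q, (κ₀ z).map (T z) = κ₁ z) :
    ∀ᵐ z ∂Q, (κ₀ z).map (fun y => T (φ y) y) = κ₁ z := by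
  filter_upwards [hfib₀, hpush] with z hz hTz
  rw [map_fiberwise_eq_map_of_ae_eq hz, hTz]

lemma map_fiberwise_comp_eq_comp (hφ : Measurable φ)
    (hT : Measurable fun q : 𝒵 × 𝒴 => T q.1 q.2)
    (hglue : ∀ᵐ z ∂Q, (κ₀ z).map (fun y => T (φ y) y) = κ₁ z) :
    (κ₀ ∘ₘ Q).map (fun y => T (φ y) y) = κ₁ ∘ₘ Q := by
  have hf := measurable_fiberwise hφ hT
  rw [Measure.map_comp Q κ₀ hf]
  refine Measure.comp_congr ?_
  filter_upwards [hglue] with z hz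
  rw [Kernel.map_apply _ hf, hz]

lemma ae_comp_fiberwise_mem_fiber [MeasurableEq 𝒵] (hφ : Measurable φ)
    (hT : Measurable fun q : 𝒵 × 𝒴 => T q.1 q.2)
    (hfib₀ : ∀ᵐ z ∂Q, ∀ᵐ y ∂κ₀ z, φ y = z) (hfib₁ : ∀ᵐ z ∂Q, ∀ᵐ y ∂κ₁ z, φ y = z)
    (hglue : ∀ᵐ z ∂Q, (κ₀ z).map (fun y => T (φ y) y) = κ₁ z) :
    ∀ᵐ y ∂(κ₀ ∘ₘ Q), φ (T (φ y) y) = φ y := by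
  have hf := measurable_fiberwise hφ hT
  refine Measure.ae_comp_of_ae_ae (measurableSet_eq_fun (hφ.comp hf) hφ) ?_
  filter_upwards [hfib₀, hfib₁, hglue] with z hz₀ hz₁ hz
  have hfz : ∀ᵐ y ∂κ₀ z, φ (T (φ y) y) = z := ae_of_ae_map hf.aemeasurable (hz ▸ hz₁)
  filter_upwards [hz₀, hfz] with y hy hfy
  rw [hfy, hy]

end Gluing

theorem stmt10_general {𝒴 𝒵 : Type*} [MeasurableSpace 𝒴]
    [MeasurableSpace 𝒵] [StandardBorelSpace 𝒵]
    (μ₀ μ₁ : Measure 𝒴)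
    (φ : 𝒴 → 𝒵) (hφ : Measurable φ)
    (Q : Measure 𝒵)
    (κ₀ κ₁ : ProbabilityTheory.Kernel 𝒵 𝒴) [IsMarkovKernel κ₀] [IsMarkovKernel κ₁]
    (hdis₀ : Q.bind κ₀ = μ₀) (hdis₁ : Q.bind κ₁ = μ₁)
    (hfib₀ : ∀ᵐ z ∂Q, κ₀ z (φ ⁻¹' {z}) = 1)
    (hfib₁ : ∀ᵐ z ∂Q, κ₁ z (φ ⁻¹' {z}) = 1)
    (T : 𝒵 → 𝒴 → 𝒴) (hT : Measurable fun q : 𝒵 × 𝒴 => T q.1 q.2)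
    (hTpush : ∀ᵐ z ∂Q, (κ₀ z).map (T z) = κ₁ z) :
    Measurable (fun y => T (φ y) y) ∧
    μ₀.map (fun y => T (φ y) y) = μ₁ ∧
    ∀ᵐ y ∂μ₀, φ (T (φ y) y) = φ y := by
  subst hdis₀ hdis₁
  have hae₀ : ∀ᵐ z ∂Q, ∀ᵐ y ∂κ₀ z, φ y = z :=
    hfib₀.mono fun z => ae_eq_of_measure_preimage_singleton_eq_one hφ
  have hae₁ : ∀ᵐ z ∂Q, ∀ᵐ y ∂κ₁ z, φ y = z :=
    hfib₁.mono fun z => ae_eq_of_measure_preimage_singleton_eq_one hφ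
  have hglue := ae_map_fiberwise_eq hae₀ hTpush
  exact ⟨measurable_fiberwise hφ hT, map_fiberwise_comp_eq_comp hφ hT hglue,
    ae_comp_fiberwise_mem_fiber hφ hT hae₀ hae₁ hglue⟩

/-- Gluing fiberwise transports: if `μ₀, μ₁` have common feature law `Q = φ#μ₀ = φ#μ₁`,
disintegrations `κ₀, κ₁` supported on the fibers of `φ`, and a jointly measurable family
of maps `T_z` pushing `κ₀(z)` to `κ₁(z)` for `Q`-a.e. `z`, then `f(y) := T_{φ(y)}(y)` is
measurable, pushes `μ₀` to `μ₁`, and preserves `φ` `μ₀`-almost surely. -/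
theorem stmt10 {𝒴 𝒵 : Type*} [MeasurableSpace 𝒴] [StandardBorelSpace 𝒴]
    [MeasurableSpace 𝒵] [StandardBorelSpace 𝒵]
    (μ₀ μ₁ : Measure 𝒴) [IsProbabilityMeasure μ₀] [IsProbabilityMeasure μ₁]
    (φ : 𝒴 → 𝒵) (hφ : Measurable φ)
    (Q : Measure 𝒵) [IsProbabilityMeasure Q]
    (hQ₀ : μ₀.map φ = Q) (hQ₁ : μ₁.map φ = Q)
    (κ₀ κ₁ : ProbabilityTheory.Kernel 𝒵 𝒴) [IsMarkovKernel κ₀] [IsMarkovKernel κ₁]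
    (hdis₀ : Q.bind κ₀ = μ₀) (hdis₁ : Q.bind κ₁ = μ₁)
    (hfib₀ : ∀ᵐ z ∂Q, κ₀ z (φ ⁻¹' {z}) = 1)
    (hfib₁ : ∀ᵐ z ∂Q, κ₁ z (φ ⁻¹' {z}) = 1)
    (T : 𝒵 → 𝒴 → 𝒴) (hT : Measurable fun q : 𝒵 × 𝒴 => T q.1 q.2)
    (hTpush : ∀ᵐ z ∂Q, (κ₀ z).map (T z) = κ₁ z) :
    Measurable (fun y => T (φ y) y) ∧
    μ₀.map (fun y => T (φ y) y) = μ₁ ∧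
    ∀ᵐ y ∂μ₀, φ (T (φ y) y) = φ y :=
  stmt10_general μ₀ μ₁ φ hφ Q κ₀ κ₁ hdis₀ hdis₁ hfib₀ hfib₁ T hT hTpush
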